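/- Let G be a graph with no 2-factor and (A,B) a biased barrier of G. Then B is an independent set in G. -/

import Mathlib

open SimpleGraph

variable {V : Type*}

/-- The number of (ordered) pairs giving edges between `X` and `Y`;
for disjoint `X`, `Y` this is the number of edges between `X` and `Y`. -/
noncomputable def eB (G : SimpleGraph V) (X Y : Set V) : ℕ :=
  Set.ncard {p : V × V | p.1 ∈ X ∧ p.2 ∈ Y ∧ G.Adj p.1 p.2}

/-- The vertex set (in `V`) of a connected component of the induced subgraph on `U`. -/
def compSupp (G : SimpleGraph V) (U : Set V)
    (C : (G.induce U).ConnectedComponent) : Set V :=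
  Subtype.val '' C.supp

/-- `δ(A,B) = 2|A| - 2|B| + ∑_{v ∈ B} d_{G-A}(v) - o(A,B)`, where `o(A,B)` is the
number of components of `G - (A ∪ B)` sending an odd number of edges to `B`. -/
noncomputable def deltaAB (G : SimpleGraph V) (A B : Set V) : ℤ :=
  2 * A.ncard - 2 * B.ncard + eB G B Aᶜ -
    Nat.card {C : (G.induce (A ∪ B)ᶜ).ConnectedComponent //
      Odd (eB G (compSupp G (A ∪ B)ᶜ C) B)}

/-- A barrier (Tutte pair) of `G`. -/
def IsBarrier (G : SimpleGraph V) (A B : Set V) : Prop :=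
  Disjoint A B ∧ deltaAB G A B ≤ -2

/-- A biased barrier: a barrier maximizing `|A|` and, subject to that, minimizing `|B|`. -/
def IsBiasedBarrier (G : SimpleGraph V) (A B : Set V) : Prop :=
  IsBarrier G A B ∧
    ∀ A' B' : Set V, IsBarrier G A' B' →
      A'.ncard ≤ A.ncard ∧ (A'.ncard = A.ncard → B.ncard ≤ B'.ncard)

/-- A `2`-factor is a `2`-regular spanning subgraph. -/
def HasTwoFactor (G : SimpleGraph V) : Prop :=
  ∃ H : SimpleGraph V, H ≤ G ∧ ∀ v : V, (H.neighborSet v).ncard = 2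

/-- The number of components of `G - S`. -/
noncomputable def numComp (G : SimpleGraph V) (S : Set V) : ℕ :=
  Nat.card ((G.induce Sᶜ).ConnectedComponent)

/-- `G` is `t`-tough: every vertex cut `S` satisfies `|S| ≥ t · c(G - S)`. -/
def Tough (t : ℝ) (G : SimpleGraph V) : Prop :=
  ∀ S : Set V, 2 ≤ numComp G S → t * (numComp G S : ℝ) ≤ (S.ncard : ℝ)

/-- The toughness `τ(G) = min_S |S| / c(G - S)` over vertex cuts `S`. -/
noncomputable def toughness (G : SimpleGraph V) : ℝ :=
  sInf {r : ℝ | ∃ S : Set V, 2 ≤ numComp G S ∧ r = (S.ncard : ℝ) / (numComp G S : ℝ)}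

/-- `G` is `k`-connected. -/
def KConnected (k : ℕ) (G : SimpleGraph V) : Prop :=
  k < Nat.card V ∧ ∀ S : Set V, S.ncard < k → (G.induce Sᶜ).Connected

/-- The independence number `α(G)`. -/
noncomputable def indepNum (G : SimpleGraph V) : ℕ :=
  sSup {n : ℕ | ∃ s : Set V, (∀ u ∈ s, ∀ v ∈ s, ¬ G.Adj u v) ∧ s.ncard = n}

/-- The minimum degree `δ(G)`. -/
noncomputable def minDeg (G : SimpleGraph V) : ℕ :=
  sInf {d : ℕ | ∃ v : V, (G.neighborSet v).ncard = d}

/-- `H` occurs as an induced subgraph of `G`. -/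
def IsInducedCopy {W : Type*} (H : SimpleGraph W) (G : SimpleGraph V) : Prop :=
  ∃ f : W ↪ V, ∀ a b : W, G.Adj (f a) (f b) ↔ H.Adj a b

/-- The disjoint union `P_m ∪ k·P_1` of a path on `m` vertices and `k` isolated vertices. -/
def pathUnion (m k : ℕ) : SimpleGraph (Fin m ⊕ Fin k) where
  Adj a b := ∃ i j : Fin m, a = Sum.inl i ∧ b = Sum.inl j ∧ (pathGraph m).Adj i j
  symm := by constructor; rintro a b ⟨i, j, rfl, rfl, h⟩; exact ⟨j, i, rfl, rfl, h.symm⟩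
  loopless := by
    constructor
    rintro a ⟨i, j, rfl, hj, h⟩
    obtain rfl := Sum.inl.inj hj
    exact (pathGraph m).loopless.irrefl i h

/-- The join `G ∨ H` of two graphs. -/
def joinG {α β : Type*} (G : SimpleGraph α) (H : SimpleGraph β) :
    SimpleGraph (α ⊕ β) where
  Adj x y :=
    match x, y with
    | Sum.inl a, Sum.inl b => G.Adj a b
    | Sum.inr a, Sum.inr b => H.Adj a b
    | _, _ => True
  symm := by constructor; rintro (a | a) (b | b) h <;> simp_all <;> exact h.symm
  loopless := by constructor; rintro (a | a) h <;> simp_all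

/-- `a` disjoint copies of the complete graph `K_b`. -/
def cliquesG (a b : ℕ) : SimpleGraph (Fin a × Fin b) where
  Adj p q := p.1 = q.1 ∧ p.2 ≠ q.2
  symm := by constructor; rintro p q ⟨h1, h2⟩; exact ⟨h1.symm, h2.symm⟩
  loopless := by constructor; rintro p ⟨_, h⟩; exact h rfl

/-- The graph `H_n`: `K_n ∨ (K̄_{2n+1} ∪ K_{2n+1})` together with a perfect matching
between the independent part and the clique part. -/
def Hgraph (n : ℕ) :
    SimpleGraph (Fin n ⊕ (Fin (2 * n + 1) ⊕ Fin (2 * n + 1))) where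
  Adj x y := x ≠ y ∧
    match x, y with
    | Sum.inl _, _ => True
    | _, Sum.inl _ => True
    | Sum.inr (Sum.inl _), Sum.inr (Sum.inl _) => False
    | Sum.inr (Sum.inr _), Sum.inr (Sum.inr _) => True
    | Sum.inr (Sum.inl i), Sum.inr (Sum.inr j) => i = j
    | Sum.inr (Sum.inr i), Sum.inr (Sum.inl j) => i = j
  symm := by
    constructor
    rintro (a | a | a) (b | b | b) ⟨hne, h⟩ <;>
      exact ⟨Ne.symm hne, by simp_all⟩
  loopless := by constructor; rintro x ⟨hne, _⟩; exact hne rfl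

/-!
Suppose `u, v ∈ B` are adjacent and put `W = V ∖ (A ∪ B)`. Passing from `(A, B)` to
`(A, B ∖ {u})` raises `2|A| - 2|B|` by `2`, lowers `∑_{x ∈ B} d_{G-A}(x)` by
`d_{G-A}(u) ≥ d_B(u) + d_W(u) ≥ 1 + d_W(u)`, and lowers `o` by at most `d_W(u)`, since only the
components of `G[W]` adjacent to `u` are affected. So `δ(A, B ∖ {u}) ≤ δ(A, B) + 1 ≤ -1`.
Moreover `δ` is always even: modulo `2`, `∑_{x ∈ B} d_{G-A}(x) ≡ e(W, B)`, and `e(W, B)` is the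
sum over the components of `G[W]` of their edge counts to `B`. Hence `(A, B ∖ {u})` is a barrier
with the same `A` and a smaller `B`, contradicting the choice of `(A, B)`.
-/

lemma SimpleGraph.Reachable.mem_of_adj_closed {α : Type*} {H : SimpleGraph α} {S : Set α}
    (hS : ∀ ⦃x y⦄, x ∈ S → H.Adj x y → y ∈ S) {x y : α} (h : H.Reachable x y) (hx : x ∈ S) :
    y ∈ S := by
  rw [reachable_iff_reflTransGen] at h
  induction h with
  | refl => exact hx
  | tail _ hadj ih => exact hS ih hadj

section TwoFactorBarrier

variable (G : SimpleGraph V)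

lemma eB_comm (X Y : Set V) : eB G X Y = eB G Y X := by
  have : {p : V × V | p.1 ∈ Y ∧ p.2 ∈ X ∧ G.Adj p.1 p.2} =
      Prod.swap '' {p : V × V | p.1 ∈ X ∧ p.2 ∈ Y ∧ G.Adj p.1 p.2} := by
    ext ⟨a, b⟩
    simp [G.adj_comm, and_comm, and_left_comm]
  rw [eB, eB, this, Set.ncard_image_of_injective _ Prod.swap_injective]

lemma eB_union_right [Finite V] (X : Set V) {Y₁ Y₂ : Set V} (h : Disjoint Y₁ Y₂) :
    eB G X (Y₁ ∪ Y₂) = eB G X Y₁ + eB G X Y₂ := by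
  rw [eB, eB, eB, ← Set.ncard_union_eq]
  · congr 1
    ext p
    simp only [Set.mem_ofPred_eq, Set.mem_union]
    tauto
  · exact Set.disjoint_left.mpr fun p h₁ h₂ => Set.disjoint_left.mp h h₁.2.1 h₂.2.1

lemma eB_union_left [Finite V] {X₁ X₂ : Set V} (Y : Set V) (h : Disjoint X₁ X₂) :
    eB G (X₁ ∪ X₂) Y = eB G X₁ Y + eB G X₂ Y := by
  simp only [eB_comm G _ Y, eB_union_right G Y h]

lemma eB_mono_right [Finite V] (X : Set V) {Y₁ Y₂ : Set V} (h : Y₁ ⊆ Y₂) :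
    eB G X Y₁ ≤ eB G X Y₂ :=
  Set.ncard_le_ncard fun _ hp => ⟨hp.1, h hp.2.1, hp.2.2⟩

lemma eB_singleton_left (u : V) (Y : Set V) :
    eB G {u} Y = (G.neighborSet u ∩ Y).ncard := by
  have : {p : V × V | p.1 ∈ ({u} : Set V) ∧ p.2 ∈ Y ∧ G.Adj p.1 p.2} =
      (u, ·) '' (G.neighborSet u ∩ Y) := by
    ext ⟨a, b⟩
    simp only [Set.mem_ofPred_eq, Set.mem_singleton_iff, Set.mem_image, Set.mem_inter_iff,
      mem_neighborSet, Prod.mk.injEq]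
    constructor
    · rintro ⟨rfl, hb, hadj⟩
      exact ⟨b, ⟨hadj, hb⟩, rfl, rfl⟩
    · rintro ⟨b, ⟨hadj, hb⟩, rfl, rfl⟩
      exact ⟨rfl, hb, hadj⟩
  rw [eB, this, Set.ncard_image_of_injective _ (Prod.mk_right_injective u)]

lemma eB_eq_of_not_adj (X Y : Set V) {u : V} (hu : ∀ x ∈ X, ¬ G.Adj x u) :
    eB G X (Y \ {u}) = eB G X Y := by
  rw [eB, eB]
  congr 1
  ext p
  simp only [Set.mem_ofPred_eq, Set.mem_sdiff, Set.mem_singleton_iff]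
  exact ⟨fun h => ⟨h.1, h.2.1.1, h.2.2⟩,
    fun h => ⟨h.1, ⟨h.2.1, fun hp => hu _ h.1 (hp ▸ h.2.2)⟩, h.2.2⟩⟩

lemma even_eB_self [Finite V] (X : Set V) : Even (eB G X X) := by
  classical
  cases nonempty_fintype V
  have : {p : V × V | p.1 ∈ X ∧ p.2 ∈ X ∧ G.Adj p.1 p.2} =
      Set.range fun d : (G.induce X).Dart => ((d.fst : V), (d.snd : V)) := by
    ext ⟨a, b⟩
    constructor
    · rintro ⟨ha, hb, hadj⟩
      exact ⟨⟨(⟨a, ha⟩, ⟨b, hb⟩), hadj⟩, rfl⟩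
    · rintro ⟨d, hd⟩
      simp only [Prod.mk.injEq] at hd
      obtain ⟨rfl, rfl⟩ := hd
      exact ⟨d.fst.2, d.snd.2, d.adj⟩
  rw [eB, this, Set.ncard_range_of_injective, Nat.card_eq_fintype_card,
    dart_card_eq_twice_card_edges]
  · exact even_two_mul _
  · intro d₁ d₂ h
    simp only [Prod.mk.injEq] at h
    exact Dart.ext _ _ (Prod.ext (Subtype.ext h.1) (Subtype.ext h.2))

lemma eB_iUnion_left [Finite V] {ι : Type*} [Finite ι] (X : ι → Set V)
    (hX : Pairwise fun i j => Disjoint (X i) (X j)) (Y : Set V) :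
    eB G (⋃ i, X i) Y = ∑ᶠ i, eB G (X i) Y := by
  unfold eB
  rw [← Set.ncard_iUnion_of_finite (fun _ => Set.toFinite _)]
  · congr 1
    ext p
    simp
  · exact fun i j hij => Set.disjoint_left.mpr fun p hi hj =>
      Set.disjoint_left.mp (hX hij) hi.1 hj.1

def oddComps (W Y : Set V) : Set (G.induce W).ConnectedComponent :=
  {C | Odd (eB G (compSupp G W C) Y)}

lemma iUnion_compSupp (W : Set V) : ⋃ C, compSupp G W C = W := by
  simp only [compSupp, ← Set.image_iUnion, iUnion_connectedComponentSupp, Set.image_univ,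
    Subtype.range_coe]

lemma pairwise_disjoint_compSupp (W : Set V) :
    Pairwise fun C C' : (G.induce W).ConnectedComponent =>
      Disjoint (compSupp G W C) (compSupp G W C') :=
  fun _ _ h => (Set.disjoint_image_iff Subtype.val_injective).mpr
    (pairwise_disjoint_supp_connectedComponent _ h)

lemma even_eB_iff_even_ncard_oddComps [Finite V] (W Y : Set V) :
    Even (eB G W Y) ↔ Even (oddComps G W Y).ncard := by
  classical
  cases nonempty_fintype (G.induce W).ConnectedComponent
  conv_lhs => rw [← iUnion_compSupp G W]
  rw [eB_iUnion_left G _ (pairwise_disjoint_compSupp G W), finsum_eq_sum_of_fintype,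
    Finset.even_sum_iff_even_card_odd, oddComps, ← Set.ncard_coe_finset, Finset.coe_filter]
  simp

lemma compSupp_map_induceHomOfLE {W W' : Set V} (h : W ⊆ W')
    (C : (G.induce W).ConnectedComponent)
    (hC : ∀ x ∈ compSupp G W C, ∀ y ∈ W', G.Adj x y → y ∈ W) :
    compSupp G W' (C.map (G.induceHomOfLE h).toHom) = compSupp G W C := by
  induction C using ConnectedComponent.ind with | h x => ?_
  ext y
  constructor
  · rintro ⟨y', hy', rfl⟩
    refine (ConnectedComponent.exact hy').symm.mem_of_adj_closed
      (S := {z : W' | (z : V) ∈ compSupp G W _}) (fun z w hz hzw => ?_) ⟨x, rfl, rfl⟩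
    have hw : (w : V) ∈ W := hC _ hz _ w.2 hzw
    obtain ⟨z', hz', hzz'⟩ := hz
    refine ⟨⟨w, hw⟩, ?_, rfl⟩
    rw [← hz']
    exact ConnectedComponent.sound (Adj.reachable (by simpa [hzz'] using hzw.symm))
  · rintro ⟨y', hy', rfl⟩
    exact ⟨G.induceHomOfLE h y', ConnectedComponent.sound
      ((ConnectedComponent.exact hy').map (G.induceHomOfLE h).toHom), rfl⟩

lemma compSupp_injective (W : Set V) : Function.Injective (compSupp G W) :=
  fun _ _ h => ConnectedComponent.supp_injective (Set.image_injective.mpr Subtype.val_injective h)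

/-- Adding a vertex `u` to `W` merges the components of `G[W]` adjacent to `u`; there are at most
`d_W(u)` of those, and the others keep their parity towards `Y \ {u}`. -/
lemma ncard_oddComps_le_insert [Finite V] (W Y : Set V) (u : V) :
    (oddComps G W Y).ncard ≤ (oddComps G (insert u W) (Y \ {u})).ncard + eB G {u} W := by
  set touched := (G.induce W).connectedComponentMk '' {z | G.Adj u z}
  have h_touched : touched.ncard ≤ eB G {u} W := by
    calc touched.ncard ≤ {z : W | G.Adj u z}.ncard := Set.ncard_image_le
      _ = eB G {u} W := by
        rw [eB_singleton_left, ← Set.ncard_image_of_injective _ Subtype.val_injective]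
        congr 1
        ext z
        simp [and_comm]
  have h_untouched : ∀ C ∉ touched, ∀ z ∈ compSupp G W C, ¬ G.Adj z u := by
    rintro C hC _ ⟨z, rfl, rfl⟩ hzu
    exact hC ⟨z, hzu.symm, rfl⟩
  have h_supp : ∀ C ∉ touched,
      compSupp G (insert u W) (C.map (G.induceHomOfLE (Set.subset_insert u W)).toHom) =
        compSupp G W C := by
    refine fun C hC => compSupp_map_induceHomOfLE G _ C fun x hx y hy hxy => ?_
    rcases hy with rfl | hy
    · exact absurd hxy (h_untouched C hC x hx)
    · exact hy
  have h_odd : (oddComps G W Y \ touched).ncard ≤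
      (oddComps G (insert u W) (Y \ {u})).ncard := by
    refine Set.ncard_le_ncard_of_injOn
      (fun C => C.map (G.induceHomOfLE (Set.subset_insert u W)).toHom)
      (fun C hC => ?_) (fun C₁ hC₁ C₂ hC₂ h => compSupp_injective G W ?_)
    · rw [oddComps, Set.mem_ofPred_eq, h_supp C hC.2,
        eB_eq_of_not_adj G _ _ (h_untouched C hC.2)]
      exact hC.1
    · rw [← h_supp C₁ hC₁.2, ← h_supp C₂ hC₂.2]
      exact congrArg _ h
  calc (oddComps G W Y).ncard ≤ (oddComps G W Y \ touched ∪ touched).ncard :=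
        Set.ncard_le_ncard (fun C hC => by by_cases h : C ∈ touched <;> simp [h, hC])
    _ ≤ (oddComps G W Y \ touched).ncard + touched.ncard := Set.ncard_union_le _ _
    _ ≤ _ := by omega

lemma deltaAB_eq (A B : Set V) :
    deltaAB G A B = 2 * A.ncard - 2 * B.ncard + eB G B Aᶜ - (oddComps G (A ∪ B)ᶜ B).ncard := by
  rw [deltaAB, ← Nat.card_coe_set_eq]
  rfl

lemma even_deltaAB [Finite V] {A B : Set V} (h : Disjoint A B) : Even (deltaAB G A B) := by
  have h_split : eB G B Aᶜ = eB G B B + eB G (A ∪ B)ᶜ B := by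
    have hA : Aᶜ = B ∪ (A ∪ B)ᶜ := by
      ext x
      have hBA : x ∈ B → x ∉ A := fun hB hA => Set.disjoint_left.mp h hA hB
      simp only [Set.mem_compl_iff, Set.mem_union]
      tauto
    rw [hA, eB_union_right G B (Set.disjoint_compl_right_iff_subset.mpr Set.subset_union_right),
      eB_comm G B (A ∪ B)ᶜ]
  have h_BB := Nat.even_iff.mp (even_eB_self G B)
  have h_odd := even_eB_iff_even_ncard_oddComps G (A ∪ B)ᶜ B
  rw [Nat.even_iff, Nat.even_iff] at h_odd
  rw [deltaAB_eq, h_split, Int.even_iff]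
  push_cast
  omega

lemma deltaAB_diff_singleton_add_le [Finite V] {A B : Set V} (hd : Disjoint A B) {u : V}
    (hu : u ∈ B) : deltaAB G A (B \ {u}) + eB G {u} (B \ {u}) ≤ deltaAB G A B + 2 := by
  have huA : u ∉ A := Set.disjoint_right.mp hd hu
  have hW : (A ∪ B \ {u})ᶜ = insert u (A ∪ B)ᶜ := by
    ext x
    by_cases hx : x = u
    · subst hx; simp [huA]
    · simp [hx]
  have h_B : eB G B Aᶜ = eB G (B \ {u}) Aᶜ + eB G {u} Aᶜ := by
    conv_lhs => rw [← Set.sdiff_union_of_subset (Set.singleton_subset_iff.mpr hu)]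
    exact eB_union_left G _ Set.disjoint_sdiff_left
  have h_u : eB G {u} (B \ {u}) + eB G {u} (A ∪ B)ᶜ ≤ eB G {u} Aᶜ := by
    rw [← eB_union_right G _
      (Set.disjoint_compl_right_iff_subset.mpr (Set.sdiff_subset.trans Set.subset_union_right))]
    exact eB_mono_right G _ (Set.union_subset (fun x hx hxA => Set.disjoint_left.mp hd hxA hx.1)
      (fun x hx hxA => hx (Or.inl hxA)))
  have h_odd := ncard_oddComps_le_insert G (A ∪ B)ᶜ B u
  have h_card := Set.ncard_sdiff_singleton_add_one hu
  rw [deltaAB_eq, deltaAB_eq, hW]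
  omega

lemma IsBarrier.diff_singleton_of_adj [Finite V] {A B : Set V} (h : IsBarrier G A B) {u v : V}
    (hu : u ∈ B) (hv : v ∈ B) (huv : G.Adj u v) : IsBarrier G A (B \ {u}) := by
  have hd : Disjoint A (B \ {u}) := h.1.mono_right Set.sdiff_subset
  have h_edge : 1 ≤ eB G {u} (B \ {u}) := by
    rw [eB_singleton_left]
    exact (Set.ncard_pos (Set.toFinite _)).mpr ⟨v, huv, hv, huv.ne'⟩
  have h_step := deltaAB_diff_singleton_add_le G h.1 hu
  obtain ⟨k, hk⟩ := even_deltaAB G hd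
  exact ⟨hd, by have := h.2; omega⟩

end TwoFactorBarrier

theorem stmt4_general {V : Type*} [Fintype V] (G : SimpleGraph V) (A B : Set V)
    (hAB : IsBiasedBarrier G A B) :
    ∀ u ∈ B, ∀ v ∈ B, ¬ G.Adj u v := by
  intro u hu v hv huv
  have h_barrier := hAB.1.diff_singleton_of_adj G hu hv huv
  have h_min := (hAB.2 A _ h_barrier).2 rfl
  have h_card := Set.ncard_sdiff_singleton_add_one hu
  omega

theorem stmt4 {V : Type*} [Fintype V] (G : SimpleGraph V) (A B : Set V)
    (hG : ¬ HasTwoFactor G) (hAB : IsBiasedBarrier G A B) :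
    ∀ u ∈ B, ∀ v ∈ B, ¬ G.Adj u v :=
  stmt4_general G A B hAB
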